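/- Let d ≥ 2 and let ⟨·⟩_d denote the normalized average over [0,2π]^{d+1}. Then ⟨φ_d²⟩_d = d(d+1)/4 and ⟨φ_d³⟩_d = (3/2)·binom(d+1, 3). -/

import Mathlib

open MeasureTheory Real

noncomputable section

/-- The simplex profile `φ_d(θ) = Σ_{0 ≤ i < j ≤ d} cos(θᵢ − θⱼ)`. -/
def phiSimplex (d : ℕ) (θ : Fin (d + 1) → ℝ) : ℝ :=
  ∑ p ∈ Finset.univ.filter (fun p : Fin (d + 1) × Fin (d + 1) => p.1 < p.2),
    Real.cos (θ p.1 - θ p.2)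

/-- Normalized average `⟨G⟩_d = (2π)^{−(d+1)} ∫_{[0,2π]^{d+1}} G`. -/
def avgSimplex (d : ℕ) (G : (Fin (d + 1) → ℝ) → ℝ) : ℝ :=
  ((2 * π) ^ (d + 1))⁻¹ *
    ∫ θ in Set.pi Set.univ (fun _ : Fin (d + 1) => Set.Icc (0 : ℝ) (2 * π)), G θ

/-!
Since `2 cos x = e^{ix} + e^{-ix}`, `φ_d(θ) = ½ Σ_{i ≠ j} e^{i(θ_i − θ_j)}`, so `φ_d^k` is `2^{-k}`
times a sum of characters `θ ↦ e^{i⟨n, θ⟩}`, one for each `k`-tuple of directed edges of the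
complete graph on `d + 1` vertices, `n` being the net flow `Σ (e_i − e_j)` of the tuple. A character
averages to `1` if `n = 0` and to `0` otherwise, so `⟨φ_d^k⟩` is `2^{-k}` times the number of
balanced (zero net flow) edge `k`-tuples. A balanced pair is an edge followed by its reverse:
`d (d + 1)` of them. A balanced triple is a directed triangle `a → b → c → a` listed from `a → b`
in one of two orders: `2 (d + 1) d (d − 1)` of them, and
`2 (d + 1) d (d − 1) / 8 = (3/2) C(d + 1, 3)`.
-/

open Finset

def periodBox (ι : Type*) : Set (ι → ℝ) := Set.univ.pi fun _ => Set.Icc 0 (2 * π)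

lemma isCompact_periodBox {ι : Type*} : IsCompact (periodBox ι) :=
  isCompact_univ_pi fun _ => isCompact_Icc

lemma setIntegral_univ_pi_prod {ι 𝕜 : Type*} [Fintype ι] [RCLike 𝕜] (s : ι → Set ℝ)
    (f : ι → ℝ → 𝕜) : ∫ θ in Set.univ.pi s, ∏ i, f i (θ i) = ∏ i, ∫ t in s i, f i t := by
  rw [volume_pi, Measure.restrict_pi_pi, integral_fintype_prod_eq_prod]

lemma setIntegral_Icc_cexp_int_mul_I (k : ℤ) :
    ∫ t in Set.Icc 0 (2 * π), Complex.exp (k * t * Complex.I) =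
      if k = 0 then ((2 * π : ℝ) : ℂ) else 0 := by
  rw [integral_Icc_eq_integral_Ioc, ← intervalIntegral.integral_of_le (by positivity)]
  split_ifs with hk
  · simp [hk]
  · have hc : (k : ℂ) * Complex.I ≠ 0 := mul_ne_zero (Int.cast_ne_zero.2 hk) Complex.I_ne_zero
    have hperiod : Complex.exp (k * Complex.I * (2 * π)) = 1 := by
      rw [← Complex.exp_int_mul_two_pi_mul_I k]
      ring_nf
    simp_rw [mul_right_comm _ _ Complex.I]
    rw [integral_exp_mul_complex hc]
    simp [hperiod]

section Characters

variable {ι : Type*} [Fintype ι]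

def torusChar (n : ι → ℤ) (θ : ι → ℝ) : ℂ :=
  Complex.exp ((∑ i, n i * θ i : ℝ) * Complex.I)

lemma continuous_torusChar (n : ι → ℤ) : Continuous (torusChar n) := by
  unfold torusChar
  fun_prop

lemma torusChar_sum {α : Type*} (s : Finset α) (n : α → ι → ℤ) (θ : ι → ℝ) :
    torusChar (∑ a ∈ s, n a) θ = ∏ a ∈ s, torusChar (n a) θ := by
  simp only [torusChar, ← Complex.exp_sum, Finset.sum_apply, Int.cast_sum, Finset.sum_mul]
  rw [Finset.sum_comm]
  push_cast
  simp only [Finset.sum_mul]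

lemma setIntegral_periodBox_torusChar (n : ι → ℤ) :
    ∫ θ in periodBox ι, torusChar n θ =
      if n = 0 then (((2 * π) ^ Fintype.card ι : ℝ) : ℂ) else 0 := by
  have hprod (θ : ι → ℝ) : torusChar n θ = ∏ i, Complex.exp (n i * θ i * Complex.I) := by
    simp [torusChar, ← Complex.exp_sum, Finset.sum_mul]
  simp_rw [hprod]
  rw [periodBox, setIntegral_univ_pi_prod _ fun i t => Complex.exp (n i * t * Complex.I)]
  simp_rw [setIntegral_Icc_cexp_int_mul_I]
  rw [Finset.prod_ite_zero]
  simp [funext_iff]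

lemma setIntegral_periodBox_sum_torusChar_pow {α : Type*} (s : Finset α) (v : α → ι → ℤ) (k : ℕ) :
    ∫ θ in periodBox ι, (∑ a ∈ s, torusChar (v a) θ) ^ k =
      ((2 * π) ^ Fintype.card ι : ℝ) *
        #{x ∈ Fintype.piFinset fun _ : Fin k => s | ∑ j, v (x j) = 0} := by
  have hexpand (θ : ι → ℝ) : (∑ a ∈ s, torusChar (v a) θ) ^ k =
      ∑ x ∈ Fintype.piFinset fun _ : Fin k => s, torusChar (∑ j, v (x j)) θ := by
    rw [← Fin.prod_const, Finset.prod_univ_sum]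
    simp only [torusChar_sum]
  have hint (n : ι → ℤ) : IntegrableOn (torusChar n) (periodBox ι) :=
    (continuous_torusChar n).continuousOn.integrableOn_compact isCompact_periodBox
  simp_rw [hexpand]
  rw [integral_finsetSum _ fun x _ => hint _]
  simp_rw [setIntegral_periodBox_torusChar, Finset.sum_ite, Finset.sum_const_zero, add_zero,
    Finset.sum_const, nsmul_eq_mul, mul_comm]

end Characters

section Edges

variable {ι : Type*} [DecidableEq ι]

def edgeVec (p : ι × ι) : ι → ℤ := Pi.single p.1 1 - Pi.single p.2 1

lemma torusChar_edgeVec [Fintype ι] (p : ι × ι) (θ : ι → ℝ) :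
    torusChar (edgeVec p) θ = Complex.exp ((θ p.1 - θ p.2 : ℝ) * Complex.I) := by
  simp [torusChar, edgeVec, sub_mul, Finset.sum_sub_distrib, Pi.single_apply]

lemma edgeVec_add_edgeVec_eq_zero_iff {p q : ι × ι} (hp : p.1 ≠ p.2) :
    edgeVec p + edgeVec q = 0 ↔ q = p.swap := by
  refine ⟨fun h => ?_, ?_⟩
  · have h1 := congrFun h p.1
    have h2 := congrFun h p.2
    simp only [edgeVec, Pi.single_apply, Pi.add_apply, Pi.sub_apply, Pi.zero_apply] at h1 h2
    ext <;> grind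
  · rintro rfl
    simp only [edgeVec, Prod.fst_swap, Prod.snd_swap]
    abel

lemma eq_triangle_of_edgeVec_add_add_eq_zero {a b c e f g : ι} (hab : a ≠ b) (hce : c ≠ e)
    (hfg : f ≠ g) (h : edgeVec (a, b) + edgeVec (c, e) + edgeVec (f, g) = 0) :
    (c = b ∧ f = e ∧ g = a ∧ e ≠ a) ∨ (e = a ∧ f = b ∧ g = c ∧ c ≠ b) := by
  have ha := congrFun h a
  have hb := congrFun h b
  have hc := congrFun h c
  have he := congrFun h e
  have hf := congrFun h f
  have hg := congrFun h g
  simp only [edgeVec, Pi.single_apply, Pi.add_apply, Pi.sub_apply, Pi.zero_apply]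
    at ha hb hc he hf hg
  grind

end Edges

section Cosines

variable {ι : Type*} [Fintype ι] [LinearOrder ι]

lemma sum_offDiag_eq_sum_lt_add_swap {M : Type*} [AddCommMonoid M] (f : ι × ι → M) :
    ∑ p ∈ univ.offDiag, f p = ∑ p ∈ univ.filter (fun p : ι × ι => p.1 < p.2), (f p + f p.swap) := by
  have hsplit : (univ.offDiag : Finset (ι × ι)) =
      univ.filter (fun p : ι × ι => p.1 < p.2) ∪ univ.filter (fun p : ι × ι => p.2 < p.1) := by
    ext p
    simp only [mem_offDiag, mem_univ, true_and, mem_union, mem_filter]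
    exact ne_iff_lt_or_gt
  rw [hsplit, sum_union (disjoint_filter.2 fun p _ h1 h2 => lt_asymm h1 h2), sum_add_distrib]
  congr 1
  exact sum_nbij' Prod.swap Prod.swap (by simp) (by simp) (by simp) (by simp) (by simp)

lemma ofReal_sum_cos_sub_eq_half_sum_torusChar (θ : ι → ℝ) :
    ((∑ p ∈ univ.filter (fun p : ι × ι => p.1 < p.2), Real.cos (θ p.1 - θ p.2) : ℝ) : ℂ) =
      (1 / 2) * ∑ p ∈ univ.offDiag, torusChar (edgeVec p) θ := by
  rw [sum_offDiag_eq_sum_lt_add_swap, mul_sum]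
  push_cast
  refine sum_congr rfl fun p _ => ?_
  rw [torusChar_edgeVec, torusChar_edgeVec, Prod.fst_swap, Prod.snd_swap, Complex.cos]
  push_cast
  ring_nf

end Cosines

section Triangles

variable {ι : Type*}

def triangleEdges (v : Fin 3 ↪ ι) : Bool → Fin 3 → ι × ι
  | true => ![(v 0, v 1), (v 1, v 2), (v 2, v 0)]
  | false => ![(v 0, v 1), (v 2, v 0), (v 1, v 2)]

lemma triangleEdges_injective :
    Function.Injective fun vb : (Fin 3 ↪ ι) × Bool => triangleEdges vb.1 vb.2 := by
  have hv {v w : Fin 3 ↪ ι} (h0 : v 0 = w 0) (h1 : v 1 = w 1) (h2 : v 2 = w 2) : v = w := by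
    ext i; fin_cases i <;> assumption
  have h12 : (1 : Fin 3) ≠ 2 := by decide
  rintro ⟨v, _ | _⟩ ⟨w, _ | _⟩ h <;>
    simp only [triangleEdges, funext_iff, Fin.forall_fin_succ, Fin.isValue, Matrix.cons_val_zero,
      Matrix.cons_val_succ, Matrix.cons_val_fin_one, Prod.mk.injEq, forall_const] at h
  · obtain ⟨⟨h0, h1⟩, ⟨h2, -⟩, -⟩ := h
    rw [hv h0 h1 h2]
  · obtain ⟨⟨-, h1⟩, -, h1', -⟩ := h
    exact absurd (w.injective (h1.symm.trans h1')) h12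
  · obtain ⟨⟨-, h1⟩, ⟨h1', -⟩, -⟩ := h
    exact absurd (w.injective (h1.symm.trans h1')) h12
  · obtain ⟨⟨h0, h1⟩, ⟨-, h2⟩, -⟩ := h
    rw [hv h0 h1 h2]

end Triangles

def balancedEdgeTuples (ι : Type*) [Fintype ι] [DecidableEq ι] (k : ℕ) :
    Finset (Fin k → ι × ι) :=
  {x ∈ Fintype.piFinset fun _ => univ.offDiag | ∑ j, edgeVec (x j) = 0}

lemma avgSimplex_phiSimplex_pow (d k : ℕ) :
    avgSimplex d (fun θ => phiSimplex d θ ^ k) =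
      #(balancedEdgeTuples (Fin (d + 1)) k) / 2 ^ k := by
  have hintegral : ∫ θ in periodBox (Fin (d + 1)), phiSimplex d θ ^ k =
      (2 * π) ^ (d + 1) * #(balancedEdgeTuples (Fin (d + 1)) k) / 2 ^ k := by
    apply Complex.ofReal_injective
    rw [← integral_complex_ofReal]
    simp_rw [Complex.ofReal_pow, phiSimplex, ofReal_sum_cos_sub_eq_half_sum_torusChar, mul_pow]
    rw [integral_const_mul, setIntegral_periodBox_sum_torusChar_pow, Fintype.card_fin,
      balancedEdgeTuples]
    push_cast
    rw [one_div_pow]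
    field_simp
    ring
  rw [avgSimplex, ← periodBox, hintegral]
  field_simp

section Counting

variable {ι : Type*} [Fintype ι] [DecidableEq ι]

lemma card_balancedEdgeTuples_two :
    #(balancedEdgeTuples ι 2) = Fintype.card ι * (Fintype.card ι - 1) := by
  rw [Nat.mul_sub_one, ← card_univ, ← offDiag_card]
  refine card_nbij' (fun x => x 0) (fun p => ![p, p.swap]) ?_ ?_ ?_ ?_
  · intro x hx
    exact Fintype.mem_piFinset.1 (mem_filter.1 hx).1 0
  · intro p hp
    simp only [coe_offDiag, Set.mem_offDiag] at hp
    simp [balancedEdgeTuples, Fin.forall_fin_two, edgeVec_add_edgeVec_eq_zero_iff hp.2.2, hp.2.2,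
      Ne.symm hp.2.2]
  · intro x hx
    obtain ⟨hoff, hsum⟩ := mem_filter.1 hx
    rw [Fin.sum_univ_two,
      edgeVec_add_edgeVec_eq_zero_iff (mem_offDiag.1 (Fintype.mem_piFinset.1 hoff 0)).2.2] at hsum
    ext j : 1
    fin_cases j <;> simp [hsum]
  · intro p _
    rfl

lemma triangleEdges_mem_balancedEdgeTuples (v : Fin 3 ↪ ι) (b : Bool) :
    triangleEdges v b ∈ balancedEdgeTuples ι 3 := by
  refine mem_filter.2 ⟨Fintype.mem_piFinset.2 fun j => ?_, ?_⟩
  · cases b <;> fin_cases j <;> simp [triangleEdges]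
  · cases b <;>
      simp only [triangleEdges, edgeVec, Fin.sum_univ_three, Fin.isValue, Matrix.cons_val_zero,
        Matrix.cons_val_one, Matrix.cons_val_two, Matrix.tail_cons, Matrix.head_cons] <;>
      abel

lemma exists_triangleEdges_eq {x : Fin 3 → ι × ι} (hx : x ∈ balancedEdgeTuples ι 3) :
    ∃ v b, triangleEdges v b = x := by
  have hinj {a b c : ι} (hab : a ≠ b) (hac : a ≠ c) (hbc : b ≠ c) :
      Function.Injective ![a, b, c] := by
    simp only [Matrix.vecCons, Fin.cons_injective_iff]
    simp [hab, hac, hbc, Function.Injective, eq_iff_true_of_subsingleton]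
  obtain ⟨⟨a, b⟩, ⟨c, e⟩, ⟨f, g⟩, rfl⟩ : ∃ p q r, x = ![p, q, r] :=
    ⟨x 0, x 1, x 2, by ext i : 1; fin_cases i <;> rfl⟩
  simp only [balancedEdgeTuples, mem_filter, Fintype.mem_piFinset, mem_offDiag, mem_univ, true_and,
    Fin.forall_fin_succ, Fin.sum_univ_three, Matrix.cons_val_zero, Matrix.cons_val_one,
    Matrix.cons_val_succ, Matrix.cons_val, Matrix.cons_val_fin_one, Fin.isValue] at hx
  obtain ⟨⟨hab, hce, hfg, -⟩, hsum⟩ := hx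
  rcases eq_triangle_of_edgeVec_add_add_eq_zero hab hce hfg hsum with
    ⟨rfl, rfl, rfl, hea⟩ | ⟨rfl, rfl, rfl, hcb⟩
  · exact ⟨⟨_, hinj hab (Ne.symm hea) hce⟩, true, rfl⟩
  · exact ⟨⟨_, hinj hab (Ne.symm hce) (Ne.symm hcb)⟩, false, rfl⟩

lemma card_balancedEdgeTuples_three :
    #(balancedEdgeTuples ι 3) = 2 * (Fintype.card ι).descFactorial 3 := by
  have himage : balancedEdgeTuples ι 3 =
      univ.image fun vb : (Fin 3 ↪ ι) × Bool => triangleEdges vb.1 vb.2 := by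
    ext x
    constructor
    · intro hx
      obtain ⟨v, b, rfl⟩ := exists_triangleEdges_eq hx
      exact mem_image_of_mem _ (mem_univ (v, b))
    · intro hx
      obtain ⟨⟨v, b⟩, -, rfl⟩ := mem_image.1 hx
      exact triangleEdges_mem_balancedEdgeTuples v b
  rw [himage, card_image_of_injective _ triangleEdges_injective, card_univ, Fintype.card_prod,
    Fintype.card_bool, Fintype.card_embedding_eq, Fintype.card_fin, mul_comm]

end Counting

theorem simplex_moments_general (d : ℕ) :
    avgSimplex d (fun θ => (phiSimplex d θ) ^ 2) = (d : ℝ) * ((d : ℝ) + 1) / 4 ∧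
    avgSimplex d (fun θ => (phiSimplex d θ) ^ 3) = (3 / 2) * (Nat.choose (d + 1) 3 : ℝ) := by
  constructor
  · rw [avgSimplex_phiSimplex_pow, card_balancedEdgeTuples_two, Fintype.card_fin]
    push_cast
    ring
  · rw [avgSimplex_phiSimplex_pow, card_balancedEdgeTuples_three, Fintype.card_fin,
      Nat.descFactorial_eq_factorial_mul_choose]
    push_cast
    norm_num [Nat.factorial]
    ring

/-- `⟨φ_d²⟩_d = d(d+1)/4` and `⟨φ_d³⟩_d = (3/2)·C(d+1,3)`. -/
theorem simplex_moments (d : ℕ) (hd : 2 ≤ d) :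
    avgSimplex d (fun θ => (phiSimplex d θ) ^ 2) = (d : ℝ) * ((d : ℝ) + 1) / 4 ∧
    avgSimplex d (fun θ => (phiSimplex d θ) ^ 3) = (3 / 2) * (Nat.choose (d + 1) 3 : ℝ) :=
  simplex_moments_general d
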